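/- The radial Attouch–Wets distance d_{AW^r}(A₁,A₂) := sup_{j∈ℕ} min{1/j, sup_{‖x‖≤j} |d_r(x,A₁) − d_r(x,A₂)|} is a metric on the family of star bodies in ℝ^d, and the resulting metric space is complete. -/

import Mathlib

open scoped ENNReal

noncomputable section

/-- Radial function of a set `A ⊆ ℝ^d` in direction `θ`. -/
def radialFn {d : ℕ} (A : Set (EuclideanSpace ℝ (Fin d)))
    (θ : EuclideanSpace ℝ (Fin d)) : ℝ≥0∞ :=
  sSup (ENNReal.ofReal '' {r : ℝ | 0 ≤ r ∧ r • θ ∈ A})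

/-- A star set: nonempty and closed under scaling by `t ∈ [0,1]`. -/
def IsStarSet {d : ℕ} (A : Set (EuclideanSpace ℝ (Fin d))) : Prop :=
  A.Nonempty ∧ ∀ a ∈ A, ∀ t : ℝ, 0 ≤ t → t ≤ 1 → t • a ∈ A

/-- A star body: a radially closed star set. -/
def IsStarBody {d : ℕ} (A : Set (EuclideanSpace ℝ (Fin d))) : Prop :=
  IsStarSet A ∧ ∀ θ : EuclideanSpace ℝ (Fin d), ‖θ‖ = 1 → radialFn A θ ≠ ⊤ →
    (radialFn A θ).toReal • θ ∈ A

open scoped Classical in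
/-- The radial distance from a point `x` to a star body `A`:
`0` if `x ∈ A`, and `‖x‖ - ρ_A(x/‖x‖)` otherwise. -/
def radialDist {d : ℕ} (x : EuclideanSpace ℝ (Fin d))
    (A : Set (EuclideanSpace ℝ (Fin d))) : ℝ :=
  if x ∈ A then 0 else ‖x‖ - (radialFn A (‖x‖⁻¹ • x)).toReal

/-- The radial Attouch–Wets distance between star bodies. -/
def dAWr {d : ℕ} (A₁ A₂ : Set (EuclideanSpace ℝ (Fin d))) : ℝ :=
  ⨆ j : ℕ, min (1 / ((j : ℝ) + 1))
    (⨆ x : Metric.closedBall (0 : EuclideanSpace ℝ (Fin d)) ((j : ℝ) + 1),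
      |radialDist (x : EuclideanSpace ℝ (Fin d)) A₁ -
        radialDist (x : EuclideanSpace ℝ (Fin d)) A₂|)


/-! On a ray `r ↦ r • θ` (`‖θ‖ = 1`) the radial distance to a star body `A` is `(r - ρ_A(θ))₊`.
Hence `d_r(·, A)` determines `A` as its zero set, and `dAWr` is a metric on star bodies.

For completeness, a `dAWr`-Cauchy sequence of star bodies has radial distance functions converging
uniformly on balls to some `f`. On each ray, `f` is a pointwise limit of functions `(r - c)₊` with
`c ∈ [0, ∞]`, and such limits are again of this form, because this class is cut out by closed
conditions: vanishing at `0`, monotone, `1`-Lipschitz, and of slope exactly `1` wherever positive.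
So `{f ≤ 0}` is a star body whose radial distance function is `f`, and it is the limit. -/

open Filter Topology Metric

/-- `rayDist h r = (r - h)₊`, the radial distance of `r • θ` to a star body with `ρ(θ) = h`. -/
def rayDist (h : ℝ≥0∞) (r : ℝ) : ℝ := (ENNReal.ofReal r - h).toReal

@[simp]
theorem rayDist_top (r : ℝ) : rayDist ⊤ r = 0 := by
  simp [rayDist]

theorem rayDist_ofReal {c : ℝ} (hc : 0 ≤ c) (r : ℝ) :
    rayDist (ENNReal.ofReal c) r = max (r - c) 0 := by
  rw [rayDist, ← ENNReal.ofReal_sub r hc, ENNReal.toReal_ofReal']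

theorem rayDist_nonneg (h : ℝ≥0∞) (r : ℝ) : 0 ≤ rayDist h r := ENNReal.toReal_nonneg

theorem rayDist_eq_zero_iff {h : ℝ≥0∞} {r : ℝ} : rayDist h r = 0 ↔ ENNReal.ofReal r ≤ h := by
  rw [rayDist, ENNReal.toReal_eq_zero_iff, tsub_eq_zero_iff_le, or_iff_left]
  exact ne_top_of_le_ne_top ENNReal.ofReal_ne_top tsub_le_self

/-- The functions `rayDist h` on `[0, ∞)`, characterized by closed conditions. -/
structure IsRayProfile (g : ℝ → ℝ) : Prop where
  zero : g 0 = 0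
  mono : ∀ ⦃s r⦄, 0 ≤ s → s ≤ r → g s ≤ g r
  le_add_sub : ∀ ⦃s r⦄, 0 ≤ s → s ≤ r → g r ≤ g s + (r - s)
  eq_add_sub_of_pos : ∀ ⦃s r⦄, 0 ≤ s → s ≤ r → 0 < g s → g r = g s + (r - s)

theorem isRayProfile_rayDist (h : ℝ≥0∞) : IsRayProfile (rayDist h) := by
  rcases eq_or_ne h ⊤ with rfl | hh
  · exact ⟨by simp, by simp, by simp +contextual, by simp⟩
  obtain ⟨c, hc, rfl⟩ : ∃ c, 0 ≤ c ∧ h = ENNReal.ofReal c :=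
    ⟨h.toReal, ENNReal.toReal_nonneg, (ENNReal.ofReal_toReal hh).symm⟩
  refine ⟨?_, fun s r _ hsr => ?_, fun s r _ hsr => ?_, fun s r _ hsr hs => ?_⟩ <;>
    simp only [rayDist_ofReal hc] at * <;> grind

theorem IsRayProfile.nonneg {g : ℝ → ℝ} (hg : IsRayProfile g) {r : ℝ} (hr : 0 ≤ r) : 0 ≤ g r :=
  hg.zero ▸ hg.mono le_rfl hr

theorem IsRayProfile.le_self {g : ℝ → ℝ} (hg : IsRayProfile g) {r : ℝ} (hr : 0 ≤ r) : g r ≤ r := by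
  simpa [hg.zero] using hg.le_add_sub le_rfl hr

theorem IsRayProfile.of_tendsto {ι : Type*} {l : Filter ι} [l.NeBot] {G : ι → ℝ → ℝ}
    {g : ℝ → ℝ} (hG : ∀ i, IsRayProfile (G i))
    (hg : ∀ r, 0 ≤ r → Tendsto (fun i => G i r) l (𝓝 (g r))) : IsRayProfile g where
  zero := tendsto_nhds_unique (hg 0 le_rfl) (by simp only [(hG _).zero, tendsto_const_nhds])
  mono _ _ hs hsr :=
    le_of_tendsto_of_tendsto' (hg _ hs) (hg _ (hs.trans hsr)) fun i => (hG i).mono hs hsr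
  le_add_sub _ _ hs hsr := le_of_tendsto_of_tendsto' (hg _ (hs.trans hsr))
    ((hg _ hs).add_const _) fun i => (hG i).le_add_sub hs hsr
  eq_add_sub_of_pos s r hs hsr hpos := by
    have hslope : ∀ᶠ i in l, G i s + (r - s) = G i r := by
      filter_upwards [(hg s hs).eventually (eventually_gt_nhds hpos)] with i hi
      exact ((hG i).eq_add_sub_of_pos hs hsr hi).symm
    exact tendsto_nhds_unique (hg r (hs.trans hsr)) (((hg s hs).add_const _).congr' hslope)

/-- `radialFn {x | f x ≤ 0} θ = rayRadius fun r => f (r • θ)` holds by `rfl`. -/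
def rayRadius (g : ℝ → ℝ) : ℝ≥0∞ := sSup (ENNReal.ofReal '' {r : ℝ | 0 ≤ r ∧ g r ≤ 0})

theorem IsRayProfile.eq_rayDist {g : ℝ → ℝ} (hg : IsRayProfile g) {r : ℝ} (hr : 0 ≤ r) :
    g r = rayDist (rayRadius g) r := by
  rcases le_or_gt (g r) 0 with hgr | hgr
  · rw [le_antisymm hgr (hg.nonneg hr), eq_comm, rayDist_eq_zero_iff]
    exact le_sSup ⟨r, ⟨hr, hgr⟩, rfl⟩
  -- the zero set of `g` is `[0, r - g r]`
  have hzero_le : ∀ s, 0 ≤ s → g s ≤ 0 → s ≤ r - g r := fun s hs hgs => by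
    have hsr : s ≤ r := le_of_not_ge fun hrs => (hgr.trans_le (hg.mono hr hrs)).not_ge hgs
    linarith [hg.le_add_sub hs hsr]
  have hzero : g (r - g r) ≤ 0 := by
    by_contra! hpos
    linarith [hg.eq_add_sub_of_pos (sub_nonneg.2 (hg.le_self hr)) (sub_le_self r hgr.le) hpos]
  have hradius : rayRadius g = ENNReal.ofReal (r - g r) := by
    refine le_antisymm (sSup_le ?_) (le_sSup ⟨_, ⟨sub_nonneg.2 (hg.le_self hr), hzero⟩, rfl⟩)
    rintro _ ⟨s, ⟨hs, hgs⟩, rfl⟩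
    exact ENNReal.ofReal_le_ofReal (hzero_le s hs hgs)
  rw [hradius, rayDist_ofReal (sub_nonneg.2 (hg.le_self hr))]
  simp [hgr.le]

theorem exists_pos_smul_of_ne_zero {E : Type*} [NormedAddCommGroup E] [NormedSpace ℝ E] {x : E}
    (hx : x ≠ 0) : ∃ r : ℝ, ∃ θ, 0 < r ∧ ‖θ‖ = 1 ∧ x = r • θ :=
  ⟨‖x‖, ‖x‖⁻¹ • x, norm_pos_iff.2 hx, norm_smul_inv_norm hx,
    (smul_inv_smul₀ (norm_ne_zero_iff.2 hx) x).symm⟩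

section StarBody

variable {d : ℕ} {A : Set (EuclideanSpace ℝ (Fin d))}

theorem IsStarSet.zero_mem (hA : IsStarSet A) : (0 : EuclideanSpace ℝ (Fin d)) ∈ A := by
  obtain ⟨⟨a, ha⟩, hs⟩ := hA
  simpa using hs a ha 0 le_rfl zero_le_one

theorem IsStarSet.smul_mem_of_le (hA : IsStarSet A) {θ : EuclideanSpace ℝ (Fin d)} {s t : ℝ}
    (hs : s • θ ∈ A) (ht : 0 ≤ t) (hts : t ≤ s) : t • θ ∈ A := by
  rcases (ht.trans hts).eq_or_lt with rfl | hs0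
  · rw [le_antisymm hts ht]
    exact hs
  · simpa [smul_smul, div_mul_cancel₀ _ hs0.ne'] using
      hA.2 _ hs (t / s) (div_nonneg ht hs0.le) (div_le_one_of_le₀ hts hs0.le)

theorem ofReal_le_radialFn_of_smul_mem {θ : EuclideanSpace ℝ (Fin d)} {r : ℝ} (hr : 0 ≤ r)
    (h : r • θ ∈ A) : ENNReal.ofReal r ≤ radialFn A θ :=
  le_sSup ⟨r, ⟨hr, h⟩, rfl⟩

theorem IsStarBody.smul_mem_of_ofReal_le (hA : IsStarBody A) {θ : EuclideanSpace ℝ (Fin d)}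
    (hθ : ‖θ‖ = 1) {r : ℝ} (hr : 0 ≤ r) (h : ENNReal.ofReal r ≤ radialFn A θ) : r • θ ∈ A := by
  by_cases htop : radialFn A θ = ⊤
  · -- otherwise `r` bounds the ray of `A` through `θ`, so `radialFn A θ ≤ ofReal r < ⊤`
    by_contra hmem
    rw [← top_le_iff] at htop
    refine ENNReal.ofReal_ne_top (r := r) (top_le_iff.1 (htop.trans (sSup_le ?_)))
    rintro _ ⟨s, ⟨hs, hsA⟩, rfl⟩
    exact ENNReal.ofReal_le_ofReal
      (le_of_not_gt fun hrs => hmem (hA.1.smul_mem_of_le hsA hr hrs.le))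
  · exact hA.1.smul_mem_of_le (hA.2 θ hθ htop) hr
      ((ENNReal.ofReal_le_iff_le_toReal htop).1 h)

theorem radialDist_of_mem {x : EuclideanSpace ℝ (Fin d)} (hx : x ∈ A) : radialDist x A = 0 :=
  if_pos hx

theorem IsStarBody.radialDist_smul (hA : IsStarBody A) {θ : EuclideanSpace ℝ (Fin d)}
    (hθ : ‖θ‖ = 1) {r : ℝ} (hr : 0 ≤ r) : radialDist (r • θ) A = rayDist (radialFn A θ) r := by
  by_cases hmem : r • θ ∈ A
  · rw [radialDist_of_mem hmem, eq_comm, rayDist_eq_zero_iff]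
    exact ofReal_le_radialFn_of_smul_mem hr hmem
  have hr0 : 0 < r := hr.lt_of_ne fun h => hmem (by simpa [← h] using hA.1.zero_mem)
  have hlt : radialFn A θ < ENNReal.ofReal r :=
    lt_of_not_ge fun h => hmem (hA.smul_mem_of_ofReal_le hθ hr h)
  have hnorm : ‖r • θ‖ = r := by rw [norm_smul, hθ, mul_one, Real.norm_of_nonneg hr]
  rw [radialDist, if_neg hmem, hnorm, smul_smul, inv_mul_cancel₀ hr0.ne', one_smul, rayDist,
    ENNReal.toReal_sub_of_le hlt.le ENNReal.ofReal_ne_top, ENNReal.toReal_ofReal hr]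

theorem IsStarBody.radialDist_nonneg (hA : IsStarBody A) (x : EuclideanSpace ℝ (Fin d)) :
    0 ≤ radialDist x A := by
  rcases eq_or_ne x 0 with rfl | hx
  · rw [radialDist_of_mem hA.1.zero_mem]
  obtain ⟨r, θ, hr, hθ, rfl⟩ := exists_pos_smul_of_ne_zero hx
  rw [hA.radialDist_smul hθ hr.le]
  exact rayDist_nonneg _ _

theorem radialDist_le_norm (x : EuclideanSpace ℝ (Fin d)) : radialDist x A ≤ ‖x‖ := by
  unfold radialDist
  split_ifs
  · exact norm_nonneg x
  · exact sub_le_self _ ENNReal.toReal_nonneg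

theorem IsStarBody.radialDist_eq_zero_iff (hA : IsStarBody A) {x : EuclideanSpace ℝ (Fin d)} :
    radialDist x A = 0 ↔ x ∈ A := by
  refine ⟨fun h => ?_, radialDist_of_mem⟩
  rcases eq_or_ne x 0 with rfl | hx
  · exact hA.1.zero_mem
  obtain ⟨r, θ, hr, hθ, rfl⟩ := exists_pos_smul_of_ne_zero hx
  rw [hA.radialDist_smul hθ hr.le, rayDist_eq_zero_iff] at h
  exact hA.smul_mem_of_ofReal_le hθ hr.le h

theorem IsStarBody.ext {B : Set (EuclideanSpace ℝ (Fin d))} (hA : IsStarBody A) (hB : IsStarBody B)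
    (h : ∀ x, radialDist x A = radialDist x B) : A = B := by
  ext x
  rw [← hA.radialDist_eq_zero_iff, ← hB.radialDist_eq_zero_iff, h]

end StarBody

section Sublevel

variable {d : ℕ} {f : EuclideanSpace ℝ (Fin d) → ℝ}

theorem isStarBody_setOf_le_zero (h0 : f 0 = 0)
    (hf : ∀ θ, ‖θ‖ = 1 → IsRayProfile fun r => f (r • θ)) : IsStarBody {x | f x ≤ 0} := by
  refine ⟨⟨⟨0, h0.le⟩, fun a ha t ht0 ht1 => ?_⟩, fun θ hθ htop => ?_⟩
  · rcases eq_or_ne a 0 with rfl | ha0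
    · simpa using ha
    obtain ⟨r, θ, hr, hθ, rfl⟩ := exists_pos_smul_of_ne_zero ha0
    change f (t • r • θ) ≤ 0
    rw [smul_smul]
    exact ((hf θ hθ).mono (mul_nonneg ht0 hr.le) (mul_le_of_le_one_left hr.le ht1)).trans ha
  · change f (_ • θ) ≤ 0
    rw [(hf θ hθ).eq_rayDist ENNReal.toReal_nonneg, rayDist_eq_zero_iff.2]
    exact ENNReal.ofReal_toReal_le

theorem radialDist_setOf_le_zero (h0 : f 0 = 0)
    (hf : ∀ θ, ‖θ‖ = 1 → IsRayProfile fun r => f (r • θ)) (x : EuclideanSpace ℝ (Fin d)) :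
    radialDist x {x | f x ≤ 0} = f x := by
  rcases eq_or_ne x 0 with rfl | hx
  · rw [radialDist_of_mem h0.le, h0]
  obtain ⟨r, θ, hr, hθ, rfl⟩ := exists_pos_smul_of_ne_zero hx
  rw [(isStarBody_setOf_le_zero h0 hf).radialDist_smul hθ hr.le]
  exact ((hf θ hθ).eq_rayDist hr.le).symm

end Sublevel

theorem min_add_le_min_add_min {α : Type*} [AddCommGroup α] [LinearOrder α]
    [IsOrderedAddMonoid α] {t a b : α} (ht : 0 ≤ t) (ha : 0 ≤ a) (hb : 0 ≤ b) :
    min t (a + b) ≤ min t a + min t b := by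
  grind

section Metric

variable {d : ℕ} {A B C : Set (EuclideanSpace ℝ (Fin d))}

/-- The inner supremum of `dAWr`: `dAWr A B = ⨆ j, min (1 / (j + 1)) (radialSupDist A B j)`
holds by `rfl`. -/
def radialSupDist (A B : Set (EuclideanSpace ℝ (Fin d))) (j : ℕ) : ℝ :=
  ⨆ x : closedBall (0 : EuclideanSpace ℝ (Fin d)) ((j : ℝ) + 1),
    |radialDist (x : EuclideanSpace ℝ (Fin d)) A - radialDist (x : EuclideanSpace ℝ (Fin d)) B|

theorem radialSupDist_nonneg (A B : Set (EuclideanSpace ℝ (Fin d))) (j : ℕ) :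
    0 ≤ radialSupDist A B j :=
  Real.iSup_nonneg fun _ => abs_nonneg _

theorem abs_radialDist_sub_le_radialSupDist (hA : IsStarBody A) (hB : IsStarBody B) {j : ℕ}
    {x : EuclideanSpace ℝ (Fin d)} (hx : ‖x‖ ≤ j + 1) :
    |radialDist x A - radialDist x B| ≤ radialSupDist A B j := by
  refine le_ciSup (f := fun y : closedBall (0 : EuclideanSpace ℝ (Fin d)) ((j : ℝ) + 1) =>
    |radialDist (y : EuclideanSpace ℝ (Fin d)) A - radialDist (y : EuclideanSpace ℝ (Fin d)) B|)
    ⟨j + 1, ?_⟩ ⟨x, mem_closedBall_zero_iff.2 hx⟩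
  rintro _ ⟨y, rfl⟩
  have hy := mem_closedBall_zero_iff.1 y.2
  exact abs_sub_le_of_nonneg_of_le (hA.radialDist_nonneg _) ((radialDist_le_norm _).trans hy)
    (hB.radialDist_nonneg _) ((radialDist_le_norm _).trans hy)

theorem radialSupDist_le {j : ℕ} {c : ℝ}
    (h : ∀ x : EuclideanSpace ℝ (Fin d), ‖x‖ ≤ j + 1 → |radialDist x A - radialDist x B| ≤ c) :
    radialSupDist A B j ≤ c :=
  have : Nonempty (closedBall (0 : EuclideanSpace ℝ (Fin d)) ((j : ℝ) + 1)) :=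
    ⟨⟨0, mem_closedBall_self (by positivity)⟩⟩
  ciSup_le fun x => h x (mem_closedBall_zero_iff.1 x.2)

theorem min_le_dAWr (A B : Set (EuclideanSpace ℝ (Fin d))) (j : ℕ) :
    min (1 / ((j : ℝ) + 1)) (radialSupDist A B j) ≤ dAWr A B := by
  refine le_ciSup (f := fun k : ℕ => min (1 / ((k : ℝ) + 1)) (radialSupDist A B k)) ⟨1, ?_⟩ j
  rintro _ ⟨k, rfl⟩
  exact (min_le_left _ _).trans (div_le_one_of_le₀ (by simp) (by positivity))

theorem dAWr_le {c : ℝ} (h : ∀ j : ℕ, min (1 / ((j : ℝ) + 1)) (radialSupDist A B j) ≤ c) :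
    dAWr A B ≤ c :=
  ciSup_le h

theorem dAWr_nonneg (A B : Set (EuclideanSpace ℝ (Fin d))) : 0 ≤ dAWr A B :=
  Real.iSup_nonneg fun _ => le_min (by positivity) (radialSupDist_nonneg A B _)

theorem dAWr_self (A : Set (EuclideanSpace ℝ (Fin d))) : dAWr A A = 0 := by
  simp [dAWr, add_nonneg]

theorem dAWr_comm (A B : Set (EuclideanSpace ℝ (Fin d))) : dAWr A B = dAWr B A := by
  simp only [dAWr, abs_sub_comm (radialDist _ A)]

theorem dAWr_triangle (hA : IsStarBody A) (hB : IsStarBody B) (hC : IsStarBody C) :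
    dAWr A C ≤ dAWr A B + dAWr B C := by
  refine dAWr_le fun j => ?_
  have hsub : radialSupDist A C j ≤ radialSupDist A B j + radialSupDist B C j :=
    radialSupDist_le fun x hx => (abs_sub_le _ (radialDist x B) _).trans <| add_le_add
      (abs_radialDist_sub_le_radialSupDist hA hB hx) (abs_radialDist_sub_le_radialSupDist hB hC hx)
  calc min (1 / ((j : ℝ) + 1)) (radialSupDist A C j)
      ≤ min (1 / ((j : ℝ) + 1)) (radialSupDist A B j + radialSupDist B C j) := by gcongr
    _ ≤ min (1 / ((j : ℝ) + 1)) (radialSupDist A B j)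
        + min (1 / ((j : ℝ) + 1)) (radialSupDist B C j) :=
      min_add_le_min_add_min (by positivity) (radialSupDist_nonneg A B j)
        (radialSupDist_nonneg B C j)
    _ ≤ dAWr A B + dAWr B C := add_le_add (min_le_dAWr A B j) (min_le_dAWr B C j)

theorem abs_radialDist_sub_lt_of_dAWr_lt (hA : IsStarBody A) (hB : IsStarBody B) {j : ℕ}
    {x : EuclideanSpace ℝ (Fin d)} (hx : ‖x‖ ≤ j + 1) {ε : ℝ} (hε : ε ≤ 1 / ((j : ℝ) + 1))
    (h : dAWr A B < ε) : |radialDist x A - radialDist x B| < ε := by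
  refine (abs_radialDist_sub_le_radialSupDist hA hB hx).trans_lt (lt_of_not_ge fun hle => ?_)
  exact h.not_ge ((le_min hε hle).trans (min_le_dAWr A B j))

theorem exists_dAWr_lt_imp_abs_radialDist_sub_lt (x : EuclideanSpace ℝ (Fin d)) {ε : ℝ}
    (hε : 0 < ε) : ∃ δ > 0, ∀ A B : Set (EuclideanSpace ℝ (Fin d)), IsStarBody A →
      IsStarBody B → dAWr A B < δ → |radialDist x A - radialDist x B| < ε := by
  refine ⟨min ε (1 / ((⌈‖x‖⌉₊ : ℝ) + 1)), by positivity, fun A B hA hB h => ?_⟩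
  exact (abs_radialDist_sub_lt_of_dAWr_lt hA hB ((Nat.le_ceil _).trans (by linarith))
    (min_le_right _ _) h).trans_le (min_le_left _ _)

theorem eq_of_dAWr_eq_zero (hA : IsStarBody A) (hB : IsStarBody B) (h : dAWr A B = 0) : A = B := by
  refine hA.ext hB fun x => eq_of_forall_dist_le fun ε hε => ?_
  obtain ⟨δ, hδ, hxδ⟩ := exists_dAWr_lt_imp_abs_radialDist_sub_lt x hε
  exact (hxδ A B hA hB (h ▸ hδ)).le

theorem dAWr_le_of_forall_abs_sub_le {j : ℕ} {δ : ℝ} (hj : 1 / ((j : ℝ) + 1) ≤ δ)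
    (h : ∀ x : EuclideanSpace ℝ (Fin d), ‖x‖ ≤ j + 1 → |radialDist x A - radialDist x B| ≤ δ) :
    dAWr A B ≤ δ := by
  refine dAWr_le fun k => ?_
  rcases le_or_gt k j with hkj | hjk
  · refine (min_le_right _ _).trans (radialSupDist_le fun x hx => h x (hx.trans ?_))
    gcongr
  · refine (min_le_left _ _).trans ((one_div_le_one_div_of_le (by positivity) ?_).trans hj)
    gcongr

theorem tendsto_dAWr_zero {ι : Type*} {l : Filter ι} {u : ι → Set (EuclideanSpace ℝ (Fin d))}
    (h : ∀ j : ℕ, ∀ᶠ n in l, ∀ x : EuclideanSpace ℝ (Fin d), ‖x‖ ≤ j + 1 →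
      |radialDist x (u n) - radialDist x B| ≤ 1 / ((j : ℝ) + 1)) :
    Tendsto (fun n => dAWr (u n) B) l (𝓝 0) := by
  refine tendsto_order.2 ⟨fun a ha => .of_forall fun n => ha.trans_le (dAWr_nonneg _ _),
    fun ε hε => ?_⟩
  obtain ⟨j, hj⟩ := exists_nat_one_div_lt hε
  filter_upwards [h j] with n hn
  exact (dAWr_le_of_forall_abs_sub_le le_rfl hn).trans_lt hj

end Metric

theorem exists_tendsto_dAWr_of_cauchy {d : ℕ} (u : ℕ → Set (EuclideanSpace ℝ (Fin d)))
    (hu : ∀ n, IsStarBody (u n))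
    (hC : ∀ ε : ℝ, 0 < ε → ∃ N : ℕ, ∀ m ≥ N, ∀ n ≥ N, dAWr (u m) (u n) < ε) :
    ∃ B : Set (EuclideanSpace ℝ (Fin d)), IsStarBody B ∧
      Tendsto (fun n => dAWr (u n) B) atTop (𝓝 0) := by
  have hcauchy (x : EuclideanSpace ℝ (Fin d)) : CauchySeq fun n => radialDist x (u n) := by
    refine Metric.cauchySeq_iff.2 fun ε hε => ?_
    obtain ⟨δ, hδ, hxδ⟩ := exists_dAWr_lt_imp_abs_radialDist_sub_lt x hε
    obtain ⟨N, hN⟩ := hC δ hδ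
    exact ⟨N, fun m hm n hn => hxδ _ _ (hu m) (hu n) (hN m hm n hn)⟩
  choose f hf using fun x => cauchySeq_tendsto_of_complete (hcauchy x)
  have h0 : f 0 = 0 := tendsto_nhds_unique (hf 0)
    (by simp only [radialDist_of_mem (hu _).1.zero_mem, tendsto_const_nhds])
  have hray (θ : EuclideanSpace ℝ (Fin d)) (hθ : ‖θ‖ = 1) : IsRayProfile fun r => f (r • θ) :=
    .of_tendsto (fun n => isRayProfile_rayDist (radialFn (u n) θ)) fun r hr => by
      simpa only [(hu _).radialDist_smul hθ hr] using hf (r • θ)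
  refine ⟨_, isStarBody_setOf_le_zero h0 hray, tendsto_dAWr_zero fun j => ?_⟩
  obtain ⟨N, hN⟩ := hC (1 / ((j : ℝ) + 1)) (by positivity)
  filter_upwards [eventually_ge_atTop N] with n hn x hx
  rw [radialDist_setOf_le_zero h0 hray]
  exact le_of_tendsto (tendsto_const_nhds.sub (hf x)).abs (eventually_atTop.2 ⟨N, fun m hm =>
    (abs_radialDist_sub_lt_of_dAWr_lt (hu n) (hu m) hx le_rfl (hN n hn m hm)).le⟩)

theorem dAWr_metric_complete {d : ℕ} :
    (∀ A B : Set (EuclideanSpace ℝ (Fin d)), IsStarBody A → IsStarBody B →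
      (dAWr A B = 0 ↔ A = B)) ∧
    (∀ A B : Set (EuclideanSpace ℝ (Fin d)), dAWr A B = dAWr B A) ∧
    (∀ A B C : Set (EuclideanSpace ℝ (Fin d)), IsStarBody A → IsStarBody B →
      IsStarBody C → dAWr A C ≤ dAWr A B + dAWr B C) ∧
    (∀ u : ℕ → Set (EuclideanSpace ℝ (Fin d)), (∀ n, IsStarBody (u n)) →
      (∀ ε : ℝ, 0 < ε → ∃ N : ℕ, ∀ m ≥ N, ∀ n ≥ N, dAWr (u m) (u n) < ε) →
      ∃ B : Set (EuclideanSpace ℝ (Fin d)), IsStarBody B ∧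
        Filter.Tendsto (fun n => dAWr (u n) B) Filter.atTop (nhds 0)) :=
  ⟨fun A _ hA hB => ⟨eq_of_dAWr_eq_zero hA hB, fun h => h ▸ dAWr_self A⟩, dAWr_comm,
    fun _ _ _ hA hB hC => dAWr_triangle hA hB hC, exists_tendsto_dAWr_of_cauchy⟩
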